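/- A one-parameter semigroup (P_t)_{t≥0} of bounded operators on a Banach space X with P₀ = id is strongly continuous (a C₀-semigroup) if it is weakly continuous at 0, i.e. μ(P_t x) → μ(x) as t → 0⁺ for every x ∈ X and μ ∈ X*. -/

import Mathlib

/-!
Weak convergence `P t x → x` forces, by the uniform boundedness principle applied twice, a bound
`‖P t‖ ≤ M` near `0`, hence on every compact interval. Consequently the vectors `x` with
`P t x → x` in norm form a closed subspace `D`. Weak right-continuity makes every orbit weakly
measurable and separably valued, hence Bochner integrable by Pettis' theorem, and the averages
`r⁻¹ ∫₀ʳ P s x` lie in `D` (as `P h` only shifts the window of integration) and converge weakly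
to `x`. A closed subspace is weakly closed, so `x ∈ D`; continuity at `t₀ > 0` then follows from
the semigroup law and the local bound.
-/

open Filter Topology
open Set MeasureTheory TopologicalSpace

section Dual

variable {𝕜 E F : Type*} [RCLike 𝕜] [NormedAddCommGroup E] [NormedSpace 𝕜 E]
  [NormedAddCommGroup F] [NormedSpace 𝕜 F]

theorem Submodule.mem_of_tendsto_dual {ι : Type*} {l : Filter ι} [l.NeBot] {p : Submodule 𝕜 E}
    (hp : IsClosed (p : Set E)) {y : ι → E} {x : E} (hy : ∀ᶠ i in l, y i ∈ p)
    (hlim : ∀ μ : StrongDual 𝕜 E, Tendsto (fun i => μ (y i)) l (𝓝 (μ x))) : x ∈ p := by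
  by_contra hx
  obtain ⟨g, hg⟩ := SeparatingDual.exists_ne_zero (R := 𝕜)
    (by simpa [Submodule.Quotient.mk_eq_zero] using hx : p.mkQL x ≠ 0)
  have hy0 : ∀ᶠ i in l, (g.comp p.mkQL) (y i) = 0 := hy.mono fun i hi => by
    simp [(Submodule.Quotient.mk_eq_zero p).2 hi]
  exact hg (tendsto_nhds_unique ((hlim _).congr' hy0) tendsto_const_nhds)

theorem exists_opNorm_le_of_forall_dual_bounded [CompleteSpace E] {ι : Type*} {T : ι → E →L[𝕜] F}
    (h : ∀ x (μ : StrongDual 𝕜 F), ∃ C, ∀ i, ‖μ (T i x)‖ ≤ C) : ∃ C, ∀ i, ‖T i‖ ≤ C := by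
  refine banach_steinhaus fun x => ?_
  obtain ⟨C, hC⟩ := banach_steinhaus (g := fun i => NormedSpace.inclusionInDoubleDual 𝕜 F (T i x))
    (h x)
  exact ⟨C, fun i => (NormedSpace.inclusionInDoubleDualLi 𝕜).norm_map (T i x) ▸ hC i⟩

theorem exists_eventually_opNorm_le_of_tendsto_dual [CompleteSpace E] {ι : Type*} {l : Filter ι}
    [l.IsCountablyGenerated] {T : ι → E →L[𝕜] F}
    (h : ∀ x (μ : StrongDual 𝕜 F), ∃ c, Tendsto (fun i => μ (T i x)) l (𝓝 c)) :
    ∃ M, ∀ᶠ i in l, ‖T i‖ ≤ M := by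
  by_contra! hcon
  obtain ⟨B, hB⟩ := l.exists_antitone_basis
  choose u hu using fun n : ℕ => ((hcon n).and_eventually (hB.mem n)).exists
  have hul : Tendsto u atTop l := hB.tendsto fun n => (hu n).2
  obtain ⟨C, hC⟩ := exists_opNorm_le_of_forall_dual_bounded (T := fun n => T (u n)) fun x μ => by
    obtain ⟨c, hc⟩ := h x μ
    obtain ⟨C, hC⟩ := (hc.comp hul).norm.bddAbove_range
    exact ⟨C, fun n => hC (mem_range_self n)⟩
  obtain ⟨n, hn⟩ := exists_nat_gt C
  exact (hu n).1.not_ge ((hC n).trans hn.le)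

theorem isClosed_setOf_tendsto_of_eventually_opNorm_le {ι : Type*} {l : Filter ι}
    {T : ι → E →L[𝕜] F} {M : ℝ} (hT : ∀ᶠ i in l, ‖T i‖ ≤ M) {f : E → F} (hf : Continuous f) :
    IsClosed {x | Tendsto (fun i => T i x) l (𝓝 (f x))} := by
  set s := {i | ‖T i‖ ≤ M}
  have hF : Equicontinuous ((↑) ∘ fun i : s => T i) :=
    ((NormedSpace.equicontinuous_TFAE fun i : s => T i).out 5 1).1
      (⟨M, fun i => i.2⟩ : ∃ C, ∀ i : s, ‖T i‖ ≤ C)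
  convert hF.isClosed_setOfPred_tendsto (l := comap (↑) l) hf using 3 with x
  exact (tendsto_comap'_iff (i := ((↑) : s → ι)) (by rw [Subtype.range_coe]; exact hT)).symm

end Dual

theorem measurable_of_measurable_dist {α β : Type*} [MeasurableSpace α] [PseudoMetricSpace β]
    [MeasurableSpace β] [BorelSpace β] {f : α → β} {c : Set β} (hc : c.Countable)
    (hfc : ∀ a, f a ∈ closure c) (hd : ∀ v ∈ c, Measurable fun a => dist (f a) v) :
    Measurable f := by
  refine measurable_of_isOpen fun U hU => ?_
  have hpre : f ⁻¹' U = ⋃ v ∈ c, ⋃ (q : ℚ) (_ : Metric.ball v (2 * q) ⊆ U),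
      {a | dist (f a) v < q} := by
    ext a
    simp only [mem_preimage, mem_iUnion, mem_ofPred_eq, exists_prop]
    constructor
    · intro ha
      obtain ⟨ε, hε, hball⟩ := Metric.isOpen_iff.1 hU (f a) ha
      obtain ⟨v, hvc, hv⟩ := Metric.mem_closure_iff.1 (hfc a) (ε / 4) (by positivity)
      obtain ⟨q, hq1, hq2⟩ := exists_rat_btwn (by linarith : ε / 4 < ε / 3)
      refine ⟨v, hvc, q, fun z hz => hball ?_, hv.trans hq1⟩
      rw [Metric.mem_ball] at hz ⊢
      linarith [dist_triangle z v (f a), dist_comm v (f a)]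
    · rintro ⟨v, -, q, hU, hq⟩
      exact hU (Metric.mem_ball.2 (by linarith [dist_nonneg (x := f a) (y := v)]))
  rw [hpre]
  exact .biUnion hc fun v hv => .iUnion fun q => .iUnion fun _ =>
    measurableSet_lt (hd v hv) measurable_const

section Pettis

variable {𝕜 E : Type*} [RCLike 𝕜] [NormedAddCommGroup E] [NormedSpace 𝕜 E]

theorem norm_eq_iSup_of_mem_closure {g : E → StrongDual 𝕜 E} (hg₁ : ∀ w, ‖g w‖ ≤ 1)
    (hg₂ : ∀ w, g w w = ‖w‖) {s : Set E} {z : E} (hz : z ∈ closure s) :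
    ‖z‖ = ⨆ w : s, ‖g w z‖ := by
  have hle : ∀ w, ‖g w z‖ ≤ ‖z‖ := fun w => (g w).le_of_opNorm_le (hg₁ w) z |>.trans_eq (one_mul _)
  have : Nonempty s := (closure_nonempty_iff.1 ⟨z, hz⟩).to_subtype
  refine le_antisymm (le_of_forall_pos_le_add fun ε hε => ?_) (ciSup_le fun w => hle w)
  obtain ⟨w, hws, hw⟩ := Metric.mem_closure_iff.1 hz (ε / 2) (by positivity)
  have hgw : ‖w‖ ≤ ‖g w z‖ + ‖w - z‖ := by
    calc ‖w‖ = ‖g w z + g w (w - z)‖ := by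
          rw [map_sub, add_sub_cancel, hg₂, RCLike.norm_ofReal, abs_norm]
      _ ≤ ‖g w z‖ + ‖g w (w - z)‖ := norm_add_le _ _
      _ ≤ ‖g w z‖ + ‖w - z‖ := by
          gcongr
          exact (g w).le_of_opNorm_le (hg₁ w) _ |>.trans_eq (one_mul _)
  have hsup : ‖g w z‖ ≤ ⨆ w : s, ‖g w z‖ := le_ciSup (f := fun w : s => ‖g w z‖)
    ⟨‖z‖, forall_mem_range.2 fun w => hle w⟩ ⟨w, hws⟩
  rw [dist_eq_norm] at hw
  linarith [norm_le_insert' z w, norm_sub_rev w z]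

/-- **Pettis measurability theorem**. -/
theorem stronglyMeasurable_of_measurable_dual {α : Type*} [MeasurableSpace α] {f : α → E}
    (hsep : IsSeparable (range f)) (hf : ∀ μ : StrongDual 𝕜 E, Measurable fun a => μ (f a)) :
    StronglyMeasurable f := by
  borelize E
  obtain ⟨c, hc, hfc⟩ := hsep
  choose g hg₁ hg₂ using fun w : E => exists_dual_vector'' 𝕜 w
  refine stronglyMeasurable_iff_measurable_separable.2
    ⟨measurable_of_measurable_dist hc (fun a => hfc ⟨a, rfl⟩) fun v _ => ?_, ⟨c, hc, hfc⟩⟩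
  have : Countable ((· - v) '' c) := (hc.image _).to_subtype
  have hdist : (fun a => dist (f a) v) = fun a => ⨆ w : (· - v) '' c, ‖g w (f a - v)‖ := by
    ext a
    rw [dist_eq_norm]
    refine norm_eq_iSup_of_mem_closure hg₁ hg₂ ?_
    exact mem_closure_image (continuous_sub_right v).continuousAt (hfc ⟨a, rfl⟩)
  rw [hdist]
  refine .iSup fun w => ?_
  simp only [map_sub]
  exact ((hf _).sub_const _).norm

noncomputable def gridCeil (n : ℕ) (s : ℝ) : ℝ := ⌈s * (n + 1)⌉ / (n + 1)

theorem gridCeil_eq_ratCast (n : ℕ) (s : ℝ) :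
    gridCeil n s = ((⌈s * (n + 1)⌉ / (n + 1) : ℚ) : ℝ) := by
  simp [gridCeil]

theorem tendsto_gridCeil (s : ℝ) : Tendsto (fun n => gridCeil n s) atTop (𝓝[≥] s) := by
  have hpos (n : ℕ) : (0 : ℝ) < n + 1 := n.cast_add_one_pos
  have hge (n : ℕ) : s ≤ gridCeil n s := by
    rw [gridCeil, le_div_iff₀ (hpos n)]
    exact Int.le_ceil _
  have hle (n : ℕ) : gridCeil n s ≤ s + 1 / (n + 1) := by
    rw [gridCeil, div_le_iff₀ (hpos n), add_mul, one_div_mul_cancel (hpos n).ne']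
    exact (Int.ceil_lt_add_one _).le
  refine tendsto_nhdsWithin_iff.2 ⟨?_, .of_forall hge⟩
  refine tendsto_of_tendsto_of_tendsto_of_le_of_le tendsto_const_nhds ?_ hge hle
  simpa using tendsto_one_div_add_atTop_nhds_zero_nat.const_add s

theorem measurable_comp_gridCeil {β : Type*} [MeasurableSpace β] (g : ℝ → β) (n : ℕ) :
    Measurable fun s => g (gridCeil n s) :=
  (measurable_of_countable fun k : ℤ => g (k / (n + 1))).comp
    (Int.measurable_ceil.comp (measurable_id.mul_const _))

theorem measurable_of_continuousWithinAt_Ici {β : Type*} [TopologicalSpace β]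
    [PseudoMetrizableSpace β] [MeasurableSpace β] [BorelSpace β] {g : ℝ → β}
    (hg : ∀ s, ContinuousWithinAt g (Ici s) s) : Measurable g :=
  measurable_of_tendsto_metrizable (measurable_comp_gridCeil g)
    (tendsto_pi_nhds.2 fun s => (hg s).tendsto.comp (tendsto_gridCeil s))

theorem stronglyMeasurable_of_forall_dual_continuousWithinAt_Ici {g : ℝ → E}
    (hg : ∀ (μ : StrongDual 𝕜 E) s, ContinuousWithinAt (fun t => μ (g t)) (Ici s) s) :
    StronglyMeasurable g := by
  -- each `g s` is a weak limit of values at rational points, hence lies in their closed span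
  set S := Submodule.span 𝕜 (range fun q : ℚ => g q)
  have hY : range g ⊆ S.topologicalClosure := by
    rintro _ ⟨s, rfl⟩
    refine S.topologicalClosure.mem_of_tendsto_dual S.isClosed_topologicalClosure
      (.of_forall fun n => S.le_topologicalClosure <|
        Submodule.subset_span ⟨_, by rw [gridCeil_eq_ratCast]⟩)
      fun μ => (hg μ s).tendsto.comp (tendsto_gridCeil s)
  refine stronglyMeasurable_of_measurable_dual (𝕜 := 𝕜) (IsSeparable.mono ?_ hY)
    fun μ => measurable_of_continuousWithinAt_Ici (hg μ)
  rw [Submodule.topologicalClosure_coe]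
  exact ((countable_range _).isSeparable.span).closure

end Pettis

theorem intervalIntegrable_of_norm_le {E : Type*} [NormedAddCommGroup E] {f : ℝ → E}
    {s : Set ℝ} {a b C : ℝ} (hf : AEStronglyMeasurable f (volume.restrict s))
    (hab : uIoc a b ⊆ s) (hC : ∀ t ∈ uIoc a b, ‖f t‖ ≤ C) : IntervalIntegrable f volume a b :=
  have : IsFiniteMeasure (volume.restrict (uIoc a b)) :=
    isFiniteMeasure_restrict.2 measure_Ioc_lt_top.ne
  intervalIntegrable_iff.2 <| (integrable_const C).mono' (hf.mono_set hab)
    ((ae_restrict_mem measurableSet_uIoc).mono hC)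

namespace OperatorSemigroup

variable {𝕜 E : Type*} [RCLike 𝕜] [NormedAddCommGroup E] [NormedSpace 𝕜 E]

def rightContinuousVectors (P : ℝ → E →L[𝕜] E) : Submodule 𝕜 E where
  carrier := {x | Tendsto (fun t => P t x) (𝓝[>] 0) (𝓝 x)}
  add_mem' ha hb := by simpa only [mem_ofPred_eq, map_add] using ha.add hb
  zero_mem' := by simpa only [mem_ofPred_eq, map_zero] using tendsto_const_nhds
  smul_mem' c x hx := by simpa only [mem_ofPred_eq, map_smul] using hx.const_smul c

variable (P : ℝ → E →L[𝕜] E)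

theorem exists_forall_Icc_opNorm_le
    (hPsg : ∀ s t : ℝ, 0 ≤ s → 0 ≤ t → P (s + t) = (P s).comp (P t)) {M : ℝ}
    (hM : ∀ᶠ t in 𝓝[>] 0, ‖P t‖ ≤ M) (T : ℝ) : ∃ C, ∀ t ∈ Icc 0 T, ‖P t‖ ≤ C := by
  obtain ⟨δ, hδ : 0 < δ, hδM⟩ := mem_nhdsGT_iff_exists_Ioc_subset.1 hM
  set K := max 1 (max M ‖P 0‖)
  have hK1 : 1 ≤ K := le_max_left _ _
  have hK : ∀ t ∈ Icc 0 δ, ‖P t‖ ≤ K := by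
    rintro t ⟨ht0, htδ⟩
    rcases ht0.eq_or_lt with rfl | ht0
    · exact (le_max_right _ _).trans (le_max_right _ _)
    · exact (hδM ⟨ht0, htδ⟩ : ‖P t‖ ≤ M).trans ((le_max_left _ _).trans (le_max_right _ _))
  have key : ∀ n : ℕ, ∀ t ∈ Icc 0 (n * δ), ‖P t‖ ≤ K ^ (n + 1) := by
    intro n
    induction n with
    | zero =>
      rintro t ⟨ht0, ht⟩
      rw [Nat.cast_zero, zero_mul] at ht
      simpa using hK t ⟨ht0, ht.trans hδ.le⟩
    | succ n ih =>
      rintro t ⟨ht0, htn⟩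
      rcases le_or_gt t δ with htδ | htδ
      · exact (hK t ⟨ht0, htδ⟩).trans (le_self_pow₀ hK1 (by omega))
      · have hsplit : P t = (P δ).comp (P (t - δ)) := by
          simpa using hPsg δ (t - δ) hδ.le (by linarith)
        calc ‖P t‖ ≤ ‖P δ‖ * ‖P (t - δ)‖ := hsplit ▸ (P δ).opNorm_comp_le _
          _ ≤ K * K ^ (n + 1) := by
            gcongr
            · exact hK δ ⟨hδ.le, le_rfl⟩
            · exact ih _ ⟨by linarith, by push_cast at htn; linarith⟩
          _ = K ^ (n + 1 + 1) := by ring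
  obtain ⟨n, hn⟩ := exists_nat_ge (T / δ)
  exact ⟨K ^ (n + 1), fun t ht => key n t ⟨ht.1, ht.2.trans ((div_le_iff₀ hδ).1 hn)⟩⟩

theorem continuousWithinAt_Ici_dual_orbit
    (hPsg : ∀ s t : ℝ, 0 ≤ s → 0 ≤ t → P (s + t) = (P s).comp (P t))
    (hweak : ∀ (x : E) (μ : StrongDual 𝕜 E),
      Tendsto (fun t => μ (P t x)) (𝓝[>] (0 : ℝ)) (𝓝 (μ x)))
    (μ : StrongDual 𝕜 E) (x : E) {s : ℝ} (hs : 0 ≤ s) :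
    ContinuousWithinAt (fun t => μ (P t x)) (Ici s) s := by
  rw [← continuousWithinAt_Ioi_iff_Ici]
  have hshift : Tendsto (fun t => t - s) (𝓝[>] s) (𝓝[>] 0) := by
    have := (continuous_sub_right s).continuousWithinAt (s := Ioi s) (x := s)
    simpa using this.tendsto_nhdsWithin fun t (ht : s < t) => mem_Ioi.2 (sub_pos.2 ht)
  refine ((hweak x (μ.comp (P s))).comp hshift).congr' ?_
  filter_upwards [self_mem_nhdsWithin] with t ht
  have hsplit := hPsg s (t - s) hs (sub_pos.2 ht).le
  rw [add_sub_cancel] at hsplit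
  simp [hsplit]

theorem aestronglyMeasurable_orbit
    (hPsg : ∀ s t : ℝ, 0 ≤ s → 0 ≤ t → P (s + t) = (P s).comp (P t))
    (hweak : ∀ (x : E) (μ : StrongDual 𝕜 E),
      Tendsto (fun t => μ (P t x)) (𝓝[>] (0 : ℝ)) (𝓝 (μ x))) (x : E) :
    AEStronglyMeasurable (fun t => P t x) (volume.restrict (Ici 0)) := by
  -- clamping at `0` makes the orbit weakly right-continuous on all of `ℝ`
  have hmeas : StronglyMeasurable fun t => P (max t 0) x :=
    stronglyMeasurable_of_forall_dual_continuousWithinAt_Ici (𝕜 := 𝕜) fun μ s =>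
      (continuousWithinAt_Ici_dual_orbit P hPsg hweak μ x (le_max_right s 0)).comp
        (f := fun t => max t 0) (continuous_id.max continuous_const).continuousWithinAt
        fun t (ht : s ≤ t) => max_le_max_right 0 ht
  refine hmeas.aestronglyMeasurable.congr ((ae_restrict_mem measurableSet_Ici).mono fun t ht => ?_)
  simp [max_eq_left (show (0 : ℝ) ≤ t from ht)]

section Integral

variable [NormedSpace ℝ E] [CompleteSpace E]

theorem apply_intervalIntegral_orbit
    (hPsg : ∀ s t : ℝ, 0 ≤ s → 0 ≤ t → P (s + t) = (P s).comp (P t)) {x : E} {a b h : ℝ}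
    (ha : 0 ≤ a) (hb : 0 ≤ b) (hh : 0 ≤ h)
    (hint : IntervalIntegrable (fun s => P s x) volume a b) :
    P h (∫ s in a..b, P s x) = ∫ s in a + h..b + h, P s x := by
  rw [← ContinuousLinearMap.intervalIntegral_comp_comm _ hint,
    ← intervalIntegral.integral_comp_add_right]
  refine intervalIntegral.integral_congr fun s hs => ?_
  have hs0 : 0 ≤ s := le_trans (le_min ha hb) hs.1
  simp [add_comm s h, hPsg h s hh hs0]

theorem intervalIntegral_orbit_mem_rightContinuousVectors
    (hPsg : ∀ s t : ℝ, 0 ≤ s → 0 ≤ t → P (s + t) = (P s).comp (P t)) {x : E} {r C : ℝ}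
    (hr : 0 < r) (hC : ∀ t ∈ Icc 0 (2 * r), ‖P t‖ ≤ C)
    (hint : ∀ a ∈ Icc 0 (2 * r), ∀ b ∈ Icc 0 (2 * r),
      IntervalIntegrable (fun s => P s x) volume a b) :
    ∫ s in 0..r, P s x ∈ rightContinuousVectors P := by
  have hnorm : ∀ a b, a ∈ Icc 0 (2 * r) → b ∈ Icc 0 (2 * r) → a ≤ b →
      ‖∫ s in a..b, P s x‖ ≤ C * ‖x‖ * (b - a) := fun a b ha hb hab => by
    refine (intervalIntegral.norm_integral_le_of_norm_le_const fun s hs => ?_).trans_eq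
      (by rw [abs_of_nonneg (sub_nonneg.2 hab)])
    rw [uIoc_of_le hab] at hs
    exact (P s).le_of_opNorm_le (hC s ⟨ha.1.trans hs.1.le, hs.2.trans hb.2⟩) x
  -- `P h ∫₀ʳ - ∫₀ʳ = ∫ᵣʳ⁺ʰ - ∫₀ʰ`, and both integrals are `O(h)`
  have hbound : ∀ h ∈ Ioc 0 r, ‖P h (∫ s in 0..r, P s x) - ∫ s in 0..r, P s x‖
      ≤ 2 * C * ‖x‖ * h := by
    rintro h ⟨hh0, hhr⟩
    have mem : ∀ {t}, 0 ≤ t → t ≤ 2 * r → t ∈ Icc 0 (2 * r) := fun h0 h1 => ⟨h0, h1⟩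
    rw [apply_intervalIntegral_orbit P hPsg le_rfl hr.le hh0.le
        (hint _ (mem le_rfl (by linarith)) _ (mem hr.le (by linarith))), zero_add,
      intervalIntegral.integral_interval_sub_interval_comm'
        (hint _ (mem hh0.le (by linarith)) _ (mem (by linarith) (by linarith)))
        (hint _ (mem le_rfl (by linarith)) _ (mem hr.le (by linarith)))
        (hint _ (mem hh0.le (by linarith)) _ (mem le_rfl (by linarith)))]
    refine (norm_sub_le _ _).trans ?_
    have h1 := hnorm r (r + h) (mem hr.le (by linarith)) (mem (by linarith) (by linarith))
      (by linarith)
    have h2 := hnorm 0 h (mem le_rfl (by linarith)) (mem hh0.le (by linarith)) hh0.le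
    rw [add_sub_cancel_left] at h1
    rw [sub_zero] at h2
    linarith
  show Tendsto _ _ _
  rw [tendsto_iff_norm_sub_tendsto_zero]
  refine squeeze_zero' (.of_forall fun _ => norm_nonneg _)
    (mem_of_superset (Ioc_mem_nhdsGT hr) hbound) ?_
  simpa using ((continuous_const_mul (2 * C * ‖x‖)).tendsto 0).mono_left nhdsWithin_le_nhds

theorem tendsto_dual_orbit_average (hP0 : P 0 = ContinuousLinearMap.id 𝕜 E) {x : E}
    (hweak : ∀ μ : StrongDual 𝕜 E, Tendsto (fun t => μ (P t x)) (𝓝[>] (0 : ℝ)) (𝓝 (μ x)))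
    (hmeas : AEStronglyMeasurable (fun t => P t x) (volume.restrict (Ici 0)))
    (hint : ∀ᶠ r in 𝓝[>] 0, IntervalIntegrable (fun s => P s x) volume 0 r)
    (μ : StrongDual 𝕜 E) :
    Tendsto (fun r : ℝ => μ ((r : 𝕜)⁻¹ • ∫ s in 0..r, P s x)) (𝓝[>] 0) (𝓝 (μ x)) := by
  have hcont : ContinuousWithinAt (fun t => μ (P t x)) (Ioi 0) 0 := by
    simpa [ContinuousWithinAt, hP0] using hweak μ
  have hmeas' : StronglyMeasurableAtFilter (fun t => μ (P t x)) (𝓝[>] 0) :=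
    ⟨Ioi 0, self_mem_nhdsWithin, μ.continuous.comp_aestronglyMeasurable
      (hmeas.mono_measure (Measure.restrict_mono Ioi_subset_Ici_self le_rfl))⟩
  have hderiv := intervalIntegral.integral_hasDerivWithinAt_right (a := 0) (s := Ici 0)
    IntervalIntegrable.refl hmeas' hcont
  rw [hasDerivWithinAt_iff_tendsto_slope, Ici_sdiff_left] at hderiv
  simp only [hP0, ContinuousLinearMap.id_apply] at hderiv
  refine hderiv.congr' ?_
  filter_upwards [hint] with r hr
  rw [slope_def_module, map_smul, ← ContinuousLinearMap.intervalIntegral_comp_comm _ hr]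
  simp [RCLike.real_smul_eq_coe_mul]

theorem mem_rightContinuousVectors (hP0 : P 0 = ContinuousLinearMap.id 𝕜 E)
    (hPsg : ∀ s t : ℝ, 0 ≤ s → 0 ≤ t → P (s + t) = (P s).comp (P t))
    (hweak : ∀ (x : E) (μ : StrongDual 𝕜 E),
      Tendsto (fun t => μ (P t x)) (𝓝[>] (0 : ℝ)) (𝓝 (μ x))) (x : E) :
    x ∈ rightContinuousVectors P := by
  obtain ⟨M, hM⟩ := exists_eventually_opNorm_le_of_tendsto_dual fun x μ => ⟨_, hweak x μ⟩
  obtain ⟨C, hC⟩ := exists_forall_Icc_opNorm_le P hPsg hM 2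
  have hmeas := aestronglyMeasurable_orbit P hPsg hweak x
  have hint : ∀ a ∈ Icc (0 : ℝ) 2, ∀ b ∈ Icc (0 : ℝ) 2,
      IntervalIntegrable (fun s => P s x) volume a b := fun a ha b hb =>
    intervalIntegrable_of_norm_le hmeas (fun t ht => le_trans (le_min ha.1 hb.1) ht.1.le)
      fun t ht => (P t).le_of_opNorm_le
        (hC t ⟨(le_min ha.1 hb.1).trans ht.1.le, ht.2.trans (max_le ha.2 hb.2)⟩) x
  refine (rightContinuousVectors P).mem_of_tendsto_dual
    (isClosed_setOf_tendsto_of_eventually_opNorm_le hM continuous_id) ?_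
    (tendsto_dual_orbit_average P hP0 (hweak x) hmeas ?_)
  · filter_upwards [Ioc_mem_nhdsGT one_pos] with r hr
    refine Submodule.smul_mem _ _ (intervalIntegral_orbit_mem_rightContinuousVectors P hPsg hr.1
      (fun t ht => hC t ⟨ht.1, by linarith [ht.2, hr.2]⟩) fun a ha b hb => hint a ?_ b ?_)
    · exact ⟨ha.1, by linarith [ha.2, hr.2]⟩
    · exact ⟨hb.1, by linarith [hb.2, hr.2]⟩
  · filter_upwards [Ioc_mem_nhdsGT one_pos] with r hr
    exact hint 0 ⟨le_rfl, zero_le_two⟩ r ⟨hr.1.le, by linarith [hr.2]⟩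

end Integral

theorem continuousOn_orbit (hP0 : P 0 = ContinuousLinearMap.id 𝕜 E)
    (hPsg : ∀ s t : ℝ, 0 ≤ s → 0 ≤ t → P (s + t) = (P s).comp (P t))
    (hbound : ∀ T, ∃ C, ∀ t ∈ Icc 0 T, ‖P t‖ ≤ C) {x : E} (hx : x ∈ rightContinuousVectors P) :
    ContinuousOn (fun t => P t x) (Ici 0) := by
  have hx0 : ContinuousWithinAt (fun t => P t x) (Ici 0) 0 := by
    rw [← continuousWithinAt_Ioi_iff_Ici, ContinuousWithinAt, hP0]
    exact hx
  intro t₀ ht₀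
  rw [← Icc_union_Ici_eq_Ici ht₀]
  refine ContinuousWithinAt.union ?_ ?_
  · obtain ⟨C, hC⟩ := hbound t₀
    have hback : Tendsto (fun t => P (t₀ - t) x) (𝓝[Icc 0 t₀] t₀) (𝓝 x) := by
      have := hx0.comp_of_eq (f := fun t => t₀ - t) (continuous_sub_left t₀).continuousWithinAt
        (fun t (ht : t ∈ Icc 0 t₀) => mem_Ici.2 (sub_nonneg.2 ht.2)) (sub_self t₀)
      simpa [ContinuousWithinAt, Function.comp_def, hP0] using this
    rw [ContinuousWithinAt, tendsto_iff_norm_sub_tendsto_zero]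
    refine squeeze_zero' (.of_forall fun _ => norm_nonneg _) ?_
      (by simpa using (tendsto_iff_norm_sub_tendsto_zero.1 hback).const_mul C)
    filter_upwards [self_mem_nhdsWithin] with t ht
    have hsplit : P t₀ = (P t).comp (P (t₀ - t)) := by
      simpa using hPsg t (t₀ - t) ht.1 (sub_nonneg.2 ht.2)
    calc ‖P t x - P t₀ x‖ = ‖P t (P (t₀ - t) x - x)‖ := by
          rw [norm_sub_rev, hsplit, ContinuousLinearMap.comp_apply, ← map_sub]
      _ ≤ C * ‖P (t₀ - t) x - x‖ := (P t).le_of_opNorm_le (hC t ht) _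
  · have hfwd := (P t₀).continuous.continuousAt.comp_continuousWithinAt
      (hx0.comp_of_eq (continuous_sub_right t₀).continuousWithinAt
        (fun t (ht : t ∈ Ici t₀) => mem_Ici.2 (sub_nonneg.2 ht)) (sub_self t₀))
    refine hfwd.congr (fun t ht => ?_) ?_
    · simpa using congrArg (· x) (hPsg t₀ (t - t₀) ht₀ (sub_nonneg.2 ht))
    · simp [hP0]

end OperatorSemigroup

/-- A one-parameter semigroup `(P_t)_{t ≥ 0}` of bounded
operators on a Banach space `X` with `P₀ = id` which is weakly continuous at
`0` (i.e. `μ(P_t x) → μ(x)` as `t → 0⁺` for every `x ∈ X`, `μ ∈ X*`) is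
strongly continuous, i.e. a C₀-semigroup. -/
theorem weakly_continuous_semigroup_is_C0
    {X : Type*} [NormedAddCommGroup X] [NormedSpace ℂ X] [CompleteSpace X]
    (P : ℝ → (X →L[ℂ] X))
    (hP0 : P 0 = ContinuousLinearMap.id ℂ X)
    (hPsg : ∀ s t : ℝ, 0 ≤ s → 0 ≤ t → P (s + t) = (P s).comp (P t))
    (hweak : ∀ (x : X) (μ : StrongDual ℂ X),
      Tendsto (fun t => μ (P t x)) (𝓝[>] (0 : ℝ)) (𝓝 (μ x))) :
    ∀ x : X, ContinuousOn (fun t => P t x) (Set.Ici (0 : ℝ)) := by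
  intro x
  obtain ⟨M, hM⟩ := exists_eventually_opNorm_le_of_tendsto_dual fun x μ => ⟨_, hweak x μ⟩
  exact OperatorSemigroup.continuousOn_orbit P hP0 hPsg
    (OperatorSemigroup.exists_forall_Icc_opNorm_le P hPsg hM)
    (OperatorSemigroup.mem_rightContinuousVectors P hP0 hPsg hweak x)
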